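/- Let t > 0 be real and k ≥ 1 an integer. Then T̃_{k+1}(t)^2 < T̃_k(t) · T̃_{k+2}(t); consequently the ratio T̃_k(t)/T̃_{k+1}(t) is strictly decreasing in k, and the sequence (T̃_k(t))_{k≥1} is unimodal: if k_min(t) := min{k ≥ 1 : T̃_k(t) ≤ T̃_{k+1}(t)} exists, then T̃_k(t) > T̃_{k+1}(t) > 0 for 1 ≤ k < k_min(t), 0 < T̃_k(t) < T̃_{k+1}(t) for k > k_min(t), and T̃_{k_min(t)}(t) = min_{k≥1} T̃_k(t). -/

import Mathlib

open MeasureTheory Real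

/-- The factor `η_k = 1 / (1 - 2 ^ (1 - 2k))`. -/
noncomputable def eta (k : ℕ) : ℝ := 1 / (1 - (2 : ℝ) ^ ((1 : ℤ) - 2 * k))

/-- The `j`-th term of the asymptotic series for the Riemann–Siegel theta function. -/
noncomputable def Ttilde (j : ℕ) (t : ℝ) : ℝ :=
  |(Polynomial.aeval ((1 : ℝ) / 2) (Polynomial.bernoulli (2 * j)) : ℝ)| /
    ((4 * (j : ℝ)) * (2 * (j : ℝ) - 1) * t ^ (2 * j - 1))

/-- `Rtildenext k t` is the remainder `R̃_{k+1}(t)` after `k` terms of the series for `ϑ(t)`. -/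
noncomputable def Rtildenext (k : ℕ) (t : ℝ) : ℝ :=
  (-∫ u in Set.Ioi (0 : ℝ),
      ((Polynomial.aeval (Int.fract (u + 1 / 2)) (Polynomial.bernoulli (2 * k)) : ℝ) : ℂ) /
        ((4 * (k : ℂ)) * ((u : ℂ) + Complex.I * t) ^ (2 * k))).im

/-- `Rtilde k t` is the remainder `R̃_k(t)` after `k - 1` terms of the series for `ϑ(t)`. -/
noncomputable def Rtilde (k : ℕ) (t : ℝ) : ℝ := Ttilde k t + Rtildenext k t


noncomputable def bhalf (j : ℕ) : ℝ :=
  (Polynomial.aeval ((1 : ℝ) / 2) (Polynomial.bernoulli (2 * j)) : ℝ)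

noncomputable def etaT (j : ℕ) : ℝ := -(∑' n : ℕ, (-1 : ℝ) ^ n * (1 / (n : ℝ) ^ (2 * j)))

-- core real inequality
lemma pow4_ge (m : ℕ) : ((m : ℝ) + 2) ^ 2 ≤ 4 ^ (m + 1) := by
  induction m with
  | zero => norm_num
  | succ n ih =>
    have : ((n : ℝ) + 1 + 2) ^ 2 ≤ 4 * ((n : ℝ) + 2) ^ 2 := by push_cast; nlinarith [n.cast_nonneg (α := ℝ)]
    calc ((↑(n + 1) : ℝ) + 2) ^ 2 ≤ 4 * ((n : ℝ) + 2) ^ 2 := by push_cast; push_cast at this; linarith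
    _ ≤ 4 * 4 ^ (n + 1) := by linarith
    _ = 4 ^ (n + 1 + 1) := by ring

lemma core_ineq (m : ℕ) (E1 E2 E3 : ℝ)
    (h1 : 1 - (1/4 : ℝ) ^ (m + 1) < E1)
    (h2p : 0 < E2) (h2 : E2 < 1)
    (h3 : 1 - (1/4 : ℝ) ^ (m + 3) < E3) (h3u : E3 < 1) :
    ((m : ℝ) + 1) * (2 * m + 1) * E2 ^ 2 < ((m : ℝ) + 2) * (2 * m + 3) * (E1 * E3) := by
  set M : ℝ := (m : ℝ) with hM
  have hM0 : 0 ≤ M := m.cast_nonneg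
  set x : ℝ := (1/4 : ℝ) ^ (m + 1) with hx
  have hxpos : 0 < x := by positivity
  have hx16 : (1/4 : ℝ) ^ (m + 3) = x / 16 := by
    rw [hx, show m + 3 = (m + 1) + 2 by omega, pow_add]; norm_num; ring
  have hxle : x * (M + 2) ^ 2 ≤ 1 := by
    have h4 : (M + 2) ^ 2 ≤ 4 ^ (m + 1) := pow4_ge m
    have : x * (4 : ℝ) ^ (m + 1) = 1 := by
      rw [hx, ← mul_pow]; norm_num
    nlinarith
  rw [hx16] at h3
  have hxq : x ≤ 1/4 := by
    calc x ≤ (1/4 : ℝ) ^ 1 := by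
          apply pow_le_pow_of_le_one (by norm_num) (by norm_num) (by omega)
    _ = 1/4 := pow_one _
  have hE1p : 0 < E1 := by nlinarith
  have hE13 : 1 - 17 * x / 16 < E1 * E3 := by nlinarith
  have hE2sq : E2 ^ 2 < 1 := by nlinarith
  have hkey : (M + 1) * (2 * M + 1) ≤ (M + 2) * (2 * M + 3) * (1 - 17 * x / 16) := by
    have h1 : x * (M + 2) * (2 * M + 3) ≤ 2 := by nlinarith
    nlinarith
  have hpos : (0 : ℝ) < (M + 2) * (2 * M + 3) := by nlinarith
  have hnn : (0:ℝ) ≤ (M + 1) * (2 * M + 1) := by nlinarith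
  calc (M + 1) * (2 * M + 1) * E2 ^ 2 ≤ (M + 1) * (2 * M + 1) * 1 :=
        mul_le_mul_of_nonneg_left hE2sq.le hnn
  _ < (M + 2) * (2 * M + 3) * (E1 * E3) := by
        nlinarith [mul_lt_mul_of_pos_left hE13 hpos]


lemma hasSum_alt (j : ℕ) (hj : 1 ≤ j) :
    HasSum (fun n : ℕ => (-1 : ℝ) ^ n * (1 / (n : ℝ) ^ (2 * j)))
      ((-1 : ℝ) ^ (j + 1) * (2 * π) ^ (2 * j) / 2 / (Nat.factorial (2 * j)) * bhalf j) := by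
  have h := hasSum_one_div_nat_pow_mul_cos (k := j) (by omega)
    (x := (1 : ℝ) / 2) (by constructor <;> norm_num)
  have hc : ∀ n : ℕ, Real.cos (2 * π * n * (1 / 2)) = (-1 : ℝ) ^ n := by
    intro n
    have := Real.cos_nat_mul_pi_sub 0 n
    simp at this
    rw [← this]; ring_nf
  have hb : (Polynomial.map (algebraMap ℚ ℝ) (Polynomial.bernoulli (2 * j))).eval ((1:ℝ)/2)
      = bhalf j := by
    rw [bhalf, Polynomial.aeval_def, Polynomial.eval_map]
  simp only [hc, hb] at h
  convert h using 2 with n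
  · ring


lemma sum_bounds (j : ℕ) (hj : 1 ≤ j) (S : ℝ)
    (h : HasSum (fun n : ℕ => (-1 : ℝ) ^ n * (1 / (n : ℝ) ^ (2 * j))) S) :
    0 < S + 1 ∧ S + 1 < (1/4 : ℝ) ^ j := by
  set f : ℕ → ℝ := fun n => (-1 : ℝ) ^ n * (1 / (n : ℝ) ^ (2 * j)) with hf
  have hf0 : f 0 = 0 := by simp [hf]; omega
  have hf1 : f 1 = -1 := by simp [hf]
  have hf2 : f 2 = (1/4 : ℝ) ^ j := by
    simp [hf, pow_mul]; norm_num
  -- shifted sum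
  have hg : HasSum (fun n => f (n + 2)) (S + 1) := by
    rw [hasSum_nat_add_iff 2]
    rw [show S + 1 + ∑ i ∈ Finset.range 2, f i = S by simp [Finset.sum_range_succ, hf0, hf1]]
    exact h
  have hgs : Summable (fun n => f (n + 2)) := hg.summable
  -- even and odd parts
  have hes : Summable (fun m : ℕ => f (2 * m + 2)) := by
    have := hgs.comp_injective (i := fun m : ℕ => 2 * m) (fun a b hab => by simp only [] at hab; omega)
    simpa [Function.comp_def] using this
  have hos : Summable (fun m : ℕ => f (2 * m + 3)) := by
    have := hgs.comp_injective (i := fun m : ℕ => 2 * m + 1) (fun a b hab => by simp only [] at hab; omega)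
    simpa [Function.comp_def, Nat.add_assoc] using this
  have heo : HasSum (fun n => f (n + 2)) (∑' m, f (2 * m + 2) + ∑' m, f (2 * m + 3)) := by
    have ho' : HasSum (fun m : ℕ => f (2 * m + 1 + 2)) (∑' m, f (2 * m + 3)) := by
      convert hos.hasSum using 2 with m
    have he' : HasSum (fun m : ℕ => f (2 * m + 2)) (∑' m, f (2 * m + 2)) := hes.hasSum
    exact HasSum.even_add_odd (f := fun n => f (n + 2)) he' ho'
  have hsum_eq : S + 1 = ∑' m, f (2 * m + 2) + ∑' m, f (2 * m + 3) := hg.unique heo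
  -- explicit forms
  have hfe : ∀ m : ℕ, f (2 * m + 2) = 1 / ((2 * m + 2 : ℕ) : ℝ) ^ (2 * j) := by
    intro m; simp [hf, pow_add, pow_mul]
  have hfo : ∀ m : ℕ, f (2 * m + 3) = -(1 / ((2 * m + 3 : ℕ) : ℝ) ^ (2 * j)) := by
    intro m
    simp only [hf]
    rw [show 2 * m + 3 = (2 * m + 2) + 1 by ring]
    rw [pow_succ, pow_add, pow_mul]
    push_cast
    ring_nf
  set A := ∑' m : ℕ, (1 / ((2 * m + 2 : ℕ) : ℝ) ^ (2 * j)) with hA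
  set B := ∑' m : ℕ, (1 / ((2 * m + 3 : ℕ) : ℝ) ^ (2 * j)) with hB
  have hAs : Summable (fun m : ℕ => 1 / ((2 * m + 2 : ℕ) : ℝ) ^ (2 * j)) := by
    have := hes; rw [show (fun m : ℕ => f (2*m+2)) = fun m : ℕ => 1 / ((2 * m + 2 : ℕ) : ℝ) ^ (2 * j) from funext hfe] at this
    exact this
  have hBs : Summable (fun m : ℕ => 1 / ((2 * m + 3 : ℕ) : ℝ) ^ (2 * j)) := by
    have := hos.neg
    rw [show (fun m : ℕ => -f (2*m+3)) = fun m : ℕ => 1 / ((2 * m + 3 : ℕ) : ℝ) ^ (2 * j) from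
      funext (fun m => by rw [hfo m]; ring)] at this
    exact this
  have hAB : S + 1 = A - B := by
    rw [hsum_eq]
    congr 1
    · exact tsum_congr hfe
    · rw [show (fun m : ℕ => f (2*m+3)) = fun m : ℕ => -(1 / ((2 * m + 3 : ℕ) : ℝ) ^ (2 * j)) from funext hfo,
        tsum_neg]
  have hterm : ∀ m : ℕ, (1 : ℝ) / ((2 * m + 3 : ℕ) : ℝ) ^ (2 * j) ≤ 1 / ((2 * m + 2 : ℕ) : ℝ) ^ (2 * j) := by
    intro m
    apply one_div_le_one_div_of_le
    · positivity
    · apply pow_le_pow_left₀ (by positivity)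
      push_cast; linarith
  have hBA : B < A := by
    apply Summable.tsum_lt_tsum (i := 0) hterm _ hBs hAs
    apply one_div_lt_one_div_of_lt
    · positivity
    · apply pow_lt_pow_left₀ _ (by positivity) (by omega)
      push_cast; norm_num
  constructor
  · rw [hAB]; linarith
  -- upper bound
  have hAshift : A = (1/4 : ℝ) ^ j + ∑' m : ℕ, (1 / ((2 * m + 4 : ℕ) : ℝ) ^ (2 * j)) := by
    rw [hA, Summable.tsum_eq_zero_add hAs]
    have h1 : (1 : ℝ) / ((2 * 0 + 2 : ℕ) : ℝ) ^ (2 * j) = (1/4 : ℝ) ^ j := by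
      have : ((2 * 0 + 2 : ℕ) : ℝ) = 2 := by norm_num
      rw [this, pow_mul]
      norm_num [one_div, ← inv_pow]
    rw [h1]
    congr 1
  have hCs : Summable (fun m : ℕ => 1 / ((2 * m + 4 : ℕ) : ℝ) ^ (2 * j)) := by
    have hinj : Function.Injective (fun m : ℕ => m + 1) := fun a b hab => by
      simp only [] at hab; omega
    refine (hAs.comp_injective hinj).congr fun m => ?_
    simp only [Function.comp]
    rw [show 2 * (m + 1) + 2 = 2 * m + 4 from by omega]
  have hCB : ∑' m : ℕ, (1 / ((2 * m + 4 : ℕ) : ℝ) ^ (2 * j)) < B := by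
    apply Summable.tsum_lt_tsum (i := 0) _ _ hCs hBs
    · intro m
      apply one_div_le_one_div_of_le
      · positivity
      · apply pow_le_pow_left₀ (by positivity)
        push_cast; linarith
    · apply one_div_lt_one_div_of_lt
      · positivity
      · apply pow_lt_pow_left₀ _ (by positivity) (by omega)
        push_cast; norm_num
  rw [hAB, hAshift]; linarith


lemma etaT_bounds (j : ℕ) (hj : 1 ≤ j) : 1 - (1/4 : ℝ) ^ j < etaT j ∧ etaT j < 1 := by
  have h := hasSum_alt j hj
  have hb := sum_bounds j hj _ h
  have ht : etaT j = -((-1 : ℝ) ^ (j + 1) * (2 * π) ^ (2 * j) / 2 / (Nat.factorial (2 * j)) * bhalf j) := by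
    rw [etaT, h.tsum_eq]
  constructor
  · rw [etaT, h.tsum_eq]; linarith [hb.2]
  · rw [etaT, h.tsum_eq]; linarith [hb.1]

lemma etaT_pos (j : ℕ) (hj : 1 ≤ j) : 0 < etaT j := by
  have h := (etaT_bounds j hj).1
  have h2 : ((1:ℝ)/4) ^ j ≤ (1/4 : ℝ) ^ 1 :=
    pow_le_pow_of_le_one (by norm_num) (by norm_num) hj
  rw [pow_one] at h2
  linarith

lemma abs_bhalf (j : ℕ) (hj : 1 ≤ j) :
    |bhalf j| = 2 * ((2 * j).factorial : ℝ) * etaT j / (2 * π) ^ (2 * j) := by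
  have h := hasSum_alt j hj
  have hV : (-1 : ℝ) ^ (j + 1) * (2 * π) ^ (2 * j) / 2 / ((2 * j).factorial : ℝ) * bhalf j
      = -(etaT j) := by
    rw [etaT, neg_neg, h.tsum_eq]
  have hfac : (0 : ℝ) < ((2 * j).factorial : ℝ) := by positivity
  have hp : (0 : ℝ) < (2 * π) ^ (2 * j) := by positivity
  have habs := congrArg abs hV
  simp only [abs_mul, abs_div, abs_pow, abs_neg, abs_one, one_pow, abs_two, Nat.abs_cast,
    one_mul] at habs
  rw [abs_of_pos pi_pos, abs_of_pos (etaT_pos j hj)] at habs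
  have h2 : |bhalf j| = etaT j * (2 * ((2 * j).factorial : ℝ)) / (2 * π) ^ (2 * j) := by
    field_simp at habs ⊢
    linarith
  rw [h2]; ring

lemma Ttilde_eq (j : ℕ) (hj : 1 ≤ j) (t : ℝ) :
    Ttilde j t = (2 * ((2 * j).factorial : ℝ) * etaT j / (2 * π) ^ (2 * j)) /
      ((4 * (j : ℝ)) * (2 * (j : ℝ) - 1) * t ^ (2 * j - 1)) := by
  have hb : (Polynomial.aeval ((1 : ℝ) / 2) (Polynomial.bernoulli (2 * j)) : ℝ) = bhalf j := rfl
  rw [Ttilde, hb, abs_bhalf j hj]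

lemma Ttilde_pos (j : ℕ) (hj : 1 ≤ j) (t : ℝ) (ht : 0 < t) : 0 < Ttilde j t := by
  rw [Ttilde_eq j hj t]
  have hE := etaT_pos j hj
  have h1 : (0:ℝ) < 2 * ((2 * j).factorial : ℝ) * etaT j / (2 * π) ^ (2 * j) := by positivity
  have hj1 : (1:ℝ) ≤ (j : ℝ) := by exact_mod_cast hj
  have hτ : (0:ℝ) < t ^ (2 * j - 1) := pow_pos ht _
  have ha : (0:ℝ) < 4 * (j : ℝ) := by linarith
  have hb : (0:ℝ) < 2 * (j : ℝ) - 1 := by linarith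
  exact div_pos h1 (mul_pos (mul_pos ha hb) hτ)

set_option maxHeartbeats 1000000 in
lemma Ttilde_sq_lt (t : ℝ) (ht : 0 < t) (k : ℕ) (hk : 1 ≤ k) :
    Ttilde (k + 1) t ^ 2 < Ttilde k t * Ttilde (k + 2) t := by
  obtain ⟨m, rfl⟩ : ∃ m, k = m + 1 := ⟨k - 1, by omega⟩
  have e1 := Ttilde_eq (m + 1) (by omega) t
  have e2 := Ttilde_eq (m + 1 + 1) (by omega) t
  have e3 := Ttilde_eq (m + 1 + 2) (by omega) t
  have hf2 : (((2 * (m + 1 + 1)).factorial : ℕ) : ℝ)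
      = (2 * (m:ℝ) + 4) * (2 * (m:ℝ) + 3) * ((2 * (m + 1)).factorial : ℝ) := by
    rw [show 2 * (m + 1 + 1) = (2 * m + 3) + 1 by omega, Nat.factorial_succ,
      show 2 * m + 3 = (2 * m + 2) + 1 by omega, Nat.factorial_succ,
      show 2 * m + 2 = 2 * (m + 1) by omega]
    push_cast; ring
  have hf3 : (((2 * (m + 1 + 2)).factorial : ℕ) : ℝ)
      = (2 * (m:ℝ) + 6) * (2 * (m:ℝ) + 5) * (2 * (m:ℝ) + 4) * (2 * (m:ℝ) + 3) *
        ((2 * (m + 1)).factorial : ℝ) := by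
    rw [show 2 * (m + 1 + 2) = (2 * m + 5) + 1 by omega, Nat.factorial_succ,
      show 2 * m + 5 = (2 * m + 4) + 1 by omega, Nat.factorial_succ,
      show 2 * m + 4 = (2 * m + 3) + 1 by omega, Nat.factorial_succ,
      show 2 * m + 3 = (2 * m + 2) + 1 by omega, Nat.factorial_succ,
      show 2 * m + 2 = 2 * (m + 1) by omega]
    push_cast; ring
  have hp2 : (2 * π) ^ (2 * (m + 1 + 1)) = (2 * π) ^ (2 * (m + 1)) * (2 * π) ^ 2 := by
    rw [← pow_add]
    congr 1 <;> omega
  have hp3 : (2 * π) ^ (2 * (m + 1 + 2)) = (2 * π) ^ (2 * (m + 1)) * (2 * π) ^ 4 := by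
    rw [← pow_add]
    congr 1 <;> omega
  have ht1 : 2 * (m + 1) - 1 = 2 * m + 1 := by omega
  have ht2 : t ^ (2 * (m + 1 + 1) - 1) = t ^ (2 * m + 1) * t ^ 2 := by
    rw [← pow_add]
    congr 1 <;> omega
  have ht3 : t ^ (2 * (m + 1 + 2) - 1) = t ^ (2 * m + 1) * t ^ 4 := by
    rw [← pow_add]
    congr 1 <;> omega
  rw [hf2, hp2, ht2] at e2
  rw [hf3, hp3, ht3] at e3
  rw [ht1] at e1
  have hE1b := etaT_bounds (m + 1) (by omega)
  have hE2b := etaT_bounds (m + 1 + 1) (by omega)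
  have hE3b := etaT_bounds (m + 1 + 2) (by omega)
  have hE1p := etaT_pos (m + 1) (by omega)
  have hE2p := etaT_pos (m + 1 + 1) (by omega)
  have hE3p := etaT_pos (m + 1 + 2) (by omega)
  have hcore : ((m : ℝ) + 1) * (2 * m + 1) * etaT (m + 1 + 1) ^ 2
      < ((m : ℝ) + 2) * (2 * m + 3) * (etaT (m + 1) * etaT (m + 1 + 2)) := by
    apply core_ineq m _ _ _ hE1b.1 hE2p hE2b.2 _ hE3b.2
    exact hE3b.1
  push_cast at e1 e2 e3
  set F : ℝ := ((2 * (m + 1)).factorial : ℝ) with hFdef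
  set P : ℝ := (2 * π) ^ (2 * (m + 1)) with hPdef
  set τ : ℝ := t ^ (2 * m + 1) with hτdef
  set A : ℝ := etaT (m + 1)
  set B : ℝ := etaT (m + 1 + 1)
  set C : ℝ := etaT (m + 1 + 2)
  have hF : (0:ℝ) < F := by rw [hFdef]; positivity
  have hP : (0:ℝ) < P := by rw [hPdef]; positivity
  have hτ : (0:ℝ) < τ := by rw [hτdef]; positivity
  have hπ := pi_pos
  have hM : (0:ℝ) ≤ (m:ℝ) := m.cast_nonneg
  clear_value F P τ A B C
  have hPne : P ≠ 0 := hP.ne'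
  have hτne : τ ≠ 0 := hτ.ne'
  have htne : t ≠ 0 := ht.ne'
  have hπne : π ≠ 0 := hπ.ne'
  have hm1 : ((m:ℝ) + 1) ≠ 0 := by positivity
  have hm2 : ((m:ℝ) + 1 + 1) ≠ 0 := by positivity
  have hm3 : ((m:ℝ) + 1 + 2) ≠ 0 := by positivity
  have hn1 : (2 * ((m:ℝ) + 1) - 1) ≠ 0 := by nlinarith
  have hn2 : (2 * ((m:ℝ) + 1 + 1) - 1) ≠ 0 := by nlinarith
  have hn3 : (2 * ((m:ℝ) + 1 + 2) - 1) ≠ 0 := by nlinarith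
  have hT1 : Ttilde (m + 1) t = F * A / (2 * ((m:ℝ) + 1) * (2 * (m:ℝ) + 1) * P * τ) := by
    rw [e1]; field_simp; ring
  have hT2 : Ttilde (m + 1 + 1) t = F * B / (P * (2 * π) ^ 2 * τ * t ^ 2) := by
    rw [e2]; field_simp; ring
  have hT3 : Ttilde (m + 1 + 2) t
      = F * ((2 * (m:ℝ) + 4) * (2 * (m:ℝ) + 3)) * C / (P * (2 * π) ^ 4 * τ * t ^ 4) := by
    rw [e3]; field_simp; ring
  have hT2sq : Ttilde (m + 1 + 1) t ^ 2
      = (F ^ 2 * B ^ 2) / (P ^ 2 * (2 * π) ^ 4 * τ ^ 2 * t ^ 4) := by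
    rw [hT2]; field_simp
  have hT1T3 : Ttilde (m + 1) t * Ttilde (m + 1 + 2) t
      = (F ^ 2 * ((2 * (m:ℝ) + 4) * (2 * (m:ℝ) + 3)) * (A * C) /
          (2 * ((m:ℝ) + 1) * (2 * (m:ℝ) + 1))) / (P ^ 2 * (2 * π) ^ 4 * τ ^ 2 * t ^ 4) := by
    rw [hT1, hT3]; field_simp
  rw [hT2sq, hT1T3, div_lt_div_iff_of_pos_right (by positivity), lt_div_iff₀ (by positivity)]
  nlinarith [mul_lt_mul_of_pos_right hcore (by positivity : (0:ℝ) < 2 * F ^ 2)]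

theorem Ttilde_log_convex_and_unimodal (t : ℝ) (ht : 0 < t) (k : ℕ) (hk : 1 ≤ k) :
    Ttilde (k + 1) t ^ 2 < Ttilde k t * Ttilde (k + 2) t ∧
    Ttilde (k + 1) t / Ttilde (k + 2) t < Ttilde k t / Ttilde (k + 1) t ∧
    ∀ kmin : ℕ, 1 ≤ kmin →
      (∀ j : ℕ, 1 ≤ j → j < kmin → ¬ Ttilde j t ≤ Ttilde (j + 1) t) →
      Ttilde kmin t ≤ Ttilde (kmin + 1) t →
      ((∀ j : ℕ, 1 ≤ j → j < kmin → Ttilde j t > Ttilde (j + 1) t ∧ Ttilde (j + 1) t > 0) ∧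
        (0 < Ttilde kmin t ∧ Ttilde kmin t ≤ Ttilde (kmin + 1) t) ∧
        (∀ j : ℕ, kmin < j → 0 < Ttilde j t ∧ Ttilde j t < Ttilde (j + 1) t) ∧
        (∀ j : ℕ, 1 ≤ j → Ttilde kmin t ≤ Ttilde j t)) := by
  have hsq := Ttilde_sq_lt t ht k hk
  have hpos : ∀ j : ℕ, 1 ≤ j → 0 < Ttilde j t := fun j hj => Ttilde_pos j hj t ht
  refine ⟨hsq, ?_, ?_⟩
  · rw [div_lt_div_iff₀ (hpos (k + 2) (by omega)) (hpos (k + 1) (by omega))]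
    nlinarith [hsq]
  · intro kmin hkmin hlt hmin
    have hstep : ∀ j : ℕ, 1 ≤ j → Ttilde j t ≤ Ttilde (j + 1) t →
        Ttilde (j + 1) t < Ttilde (j + 2) t := by
      intro j hj hle
      have hsq' := Ttilde_sq_lt t ht j hj
      have h1 := hpos (j + 1) (by omega)
      have h2 := hpos (j + 2) (by omega)
      nlinarith
    have key : ∀ n : ℕ, Ttilde (kmin + n) t ≤ Ttilde (kmin + n + 1) t := by
      intro n
      induction n with
      | zero => simpa using hmin
      | succ p ih =>
        exact (hstep (kmin + p) (by omega) ih).le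
    have keystrict : ∀ n : ℕ, Ttilde (kmin + n + 1) t < Ttilde (kmin + n + 2) t :=
      fun n => hstep (kmin + n) (by omega) (key n)
    refine ⟨?_, ⟨hpos kmin hkmin, hmin⟩, ?_, ?_⟩
    · intro j hj hjk
      exact ⟨lt_of_not_ge (hlt j hj hjk), hpos (j + 1) (by omega)⟩
    · intro j hj
      obtain ⟨n, rfl⟩ : ∃ n, j = kmin + n + 1 := ⟨j - kmin - 1, by omega⟩
      exact ⟨hpos _ (by omega), keystrict n⟩
    · intro j hj
      rcases le_or_gt kmin j with hle | hgt
      · -- j ≥ kmin : increasing side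
        obtain ⟨n, rfl⟩ : ∃ n, j = kmin + n := ⟨j - kmin, by omega⟩
        clear hle hj
        induction n with
        | zero => simp
        | succ p ih =>
          calc Ttilde kmin t ≤ Ttilde (kmin + p) t := ih
          _ ≤ Ttilde (kmin + p + 1) t := key p
          _ = Ttilde (kmin + (p + 1)) t := by rw [show kmin + (p + 1) = kmin + p + 1 by omega]
      · -- j < kmin : decreasing side
        obtain ⟨n, hn⟩ : ∃ n, j + n = kmin := ⟨kmin - j, by omega⟩
        clear hgt
        induction n generalizing j with
        | zero => simp at hn; rw [hn]
        | succ p ih =>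
          have hjk : j < kmin := by omega
          have h1 : Ttilde (j + 1) t < Ttilde j t := lt_of_not_ge (by
            intro hcon
            exact (hlt j hj hjk) (by linarith))
          have h2 : Ttilde kmin t ≤ Ttilde (j + 1) t := ih (j + 1) (by omega) (by omega)
          linarith
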